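/- There exists a constant C > 0, depending only on H, such that for every integer n ≥ 1 and all 0 ≤ s ≤ t ≤ 1, ∫₀¹ |t−r|^{H−1/2} (ΔK̃(t,r) − ΔK̃(s,r)) dr ≤ C (n^{−2H} + (t−s)^{2H} + n^{−H} (ε(t) + ε(s))). -/

import Mathlib

open MeasureTheory intervalIntegral
open scoped Classical NNReal
open Set

/-- Grid projection `η(t) = ⌊nt⌋/n`. -/
noncomputable def gridEta (n : ℕ) (t : ℝ) : ℝ := (⌊(n : ℝ) * t⌋ : ℝ) / n

/-- Positive-part fractional power `x₊^(H-1/2)`. -/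
noncomputable def posPow (H x : ℝ) : ℝ := if 0 < x then x ^ (H - 1/2) else 0

/-- The symmetrized fractional kernel `K̃(t,r) = |t-r|^(H-1/2)`. -/
noncomputable def symK (H t r : ℝ) : ℝ := |t - r| ^ (H - 1/2)

/-- The discretized symmetrized kernel `K̃'(t,r) = (η(t)-r)₊^(H-1/2) + (η(r)-t)₊^(H-1/2)`. -/
noncomputable def symK' (H : ℝ) (n : ℕ) (t r : ℝ) : ℝ :=
  posPow H (gridEta n t - r) + posPow H (gridEta n r - t)

/-- `ΔK̃ = K̃' - K̃`. -/
noncomputable def deltaSymK (H : ℝ) (n : ℕ) (t r : ℝ) : ℝ := symK' H n t r - symK H t r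

/-- `ε(t) = n^(-1/2) (⌈nt⌉/n - t)^(H-1/2)` when `nt ∉ ℤ`, and `ε(t) = 0` when `nt ∈ ℤ`. -/
noncomputable def epsFn (H : ℝ) (n : ℕ) (t : ℝ) : ℝ :=
  if ∃ m : ℤ, (n : ℝ) * t = m then 0
  else (n : ℝ) ^ (-(1/2) : ℝ) * ((⌈(n : ℝ) * t⌉ : ℝ) / n - t) ^ (H - 1/2)

section Aux

variable {H : ℝ}

lemma rpow_anti (hH1 : H < 1/2) {x y : ℝ} (hx : 0 < x) (hxy : x ≤ y) :
    y ^ (H - 1/2) ≤ x ^ (H - 1/2) :=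
  Real.rpow_le_rpow_of_nonpos hx hxy (by linarith)

lemma rpow_anti' (hH1 : H < 1/2) {x y : ℝ} (hx : 0 < x) (hxy : x ≤ y) :
    y ^ (2*H - 1) ≤ x ^ (2*H - 1) :=
  Real.rpow_le_rpow_of_nonpos hx hxy (by linarith)

lemma sq_rpow (hH1 : H < 1/2) {x : ℝ} (hx : 0 ≤ x) :
    x ^ (H - 1/2) * x ^ (H - 1/2) = x ^ (2*H - 1) := by
  rw [← Real.rpow_add' hx (by intro h; nlinarith : (H - 1/2) + (H - 1/2) ≠ 0)]
  congr 1; ring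

lemma posPow_nonneg (H x : ℝ) : 0 ≤ posPow H x := by
  unfold posPow; split
  · exact Real.rpow_nonneg (le_of_lt (by assumption)) _
  · exact le_refl 0

lemma posPow_of_nonpos {x : ℝ} (hx : x ≤ 0) : posPow H x = 0 := if_neg (not_lt.2 hx)

lemma posPow_eq_rpow (hH1 : H < 1/2) {x : ℝ} (hx : 0 ≤ x) :
    posPow H x = x ^ (H - 1/2) := by
  rcases eq_or_lt_of_le hx with h | h
  · rw [posPow_of_nonpos h.ge, ← h, Real.zero_rpow (by intro hh; nlinarith)]
  · exact if_pos h

/-! grid lemmas -/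

variable {n : ℕ}

lemma npos (hn : 1 ≤ n) : (0:ℝ) < n := by exact_mod_cast Nat.pos_of_ne_zero (by omega)

lemma gridEta_le (hn : 1 ≤ n) (t : ℝ) : gridEta n t ≤ t := by
  rw [gridEta, div_le_iff₀ (npos hn)]
  calc ((⌊(n:ℝ)*t⌋ : ℝ)) ≤ (n:ℝ)*t := Int.floor_le _
  _ = t * n := by ring

lemma lt_gridEta_add (hn : 1 ≤ n) (t : ℝ) : t < gridEta n t + ((n:ℝ))⁻¹ := by
  have h := Int.lt_floor_add_one ((n:ℝ)*t)
  rw [gridEta]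
  have hp := npos hn
  rw [← sub_lt_iff_lt_add, lt_div_iff₀ hp, sub_mul]
  have h2 : ((n:ℝ))⁻¹ * n = 1 := inv_mul_cancel₀ (ne_of_gt hp)
  have h3 : t * (n:ℝ) = (n:ℝ) * t := by ring
  linarith

lemma gridEta_nonneg (hn : 1 ≤ n) {t : ℝ} (ht : 0 ≤ t) : 0 ≤ gridEta n t := by
  apply div_nonneg _ (le_of_lt (npos hn))
  exact_mod_cast Int.floor_nonneg.2 (by positivity)

lemma grid_le_gridEta (hn : 1 ≤ n) {m : ℤ} {r : ℝ} (h : (m:ℝ)/n ≤ r) :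
    (m:ℝ)/n ≤ gridEta n r := by
  have hp := npos hn
  rw [div_le_iff₀ hp] at h ⊢
  have hf : (m:ℤ) ≤ ⌊(n:ℝ)*r⌋ := Int.le_floor.2 (by rw [mul_comm]; exact h)
  rw [gridEta, div_mul_cancel₀ _ (ne_of_gt hp)]
  exact_mod_cast hf


noncomputable def etaUp (n : ℕ) (t : ℝ) : ℝ := (⌈(n : ℝ) * t⌉ : ℝ) / n

lemma le_etaUp (hn : 1 ≤ n) (t : ℝ) : t ≤ etaUp n t := by
  have hp := npos hn
  rw [etaUp, le_div_iff₀ hp]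
  calc t * (n:ℝ) = (n:ℝ) * t := by ring
  _ ≤ ((⌈(n:ℝ)*t⌉ : ℝ)) := Int.le_ceil _

lemma etaUp_lt (hn : 1 ≤ n) (t : ℝ) : etaUp n t < t + ((n:ℝ))⁻¹ := by
  have hp := npos hn
  rw [etaUp, div_lt_iff₀ hp]
  have h := Int.ceil_lt_add_one ((n:ℝ)*t)
  have h2 : ((n:ℝ))⁻¹ * n = 1 := inv_mul_cancel₀ (ne_of_gt hp)
  nlinarith

lemma etaUp_le_one (hn : 1 ≤ n) {t : ℝ} (ht : t ≤ 1) : etaUp n t ≤ 1 := by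
  have hp := npos hn
  rw [etaUp, div_le_iff₀ hp]
  have : (⌈(n:ℝ)*t⌉ : ℤ) ≤ (n:ℤ) := by
    apply Int.ceil_le.2; push_cast; nlinarith
  calc ((⌈(n:ℝ)*t⌉:ℝ)) ≤ ((n:ℝ)) := by exact_mod_cast this
  _ = 1 * n := by ring

lemma gridEta_mul_int (hn : 1 ≤ n) (r : ℝ) : ∃ k : ℤ, gridEta n r = (k:ℝ)/n :=
  ⟨⌊(n:ℝ)*r⌋, rfl⟩

/-- if `gridEta n r > t` then `etaUp n t ≤ gridEta n r` -/
lemma etaUp_le_gridEta (hn : 1 ≤ n) {t r : ℝ} (h : t < gridEta n r) :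
    etaUp n t ≤ gridEta n r := by
  have hp := npos hn
  rw [gridEta, lt_div_iff₀ hp] at h
  have h1 : (n:ℝ)*t < ((⌊(n:ℝ)*r⌋:ℤ):ℝ) := by rw [mul_comm]; exact h
  have h2 : (⌈(n:ℝ)*t⌉:ℤ) ≤ ⌊(n:ℝ)*r⌋ := Int.ceil_le.2 h1.le
  rw [etaUp, gridEta, div_le_div_iff_of_pos_right hp]
  exact_mod_cast h2

/-- if `etaUp n t + 1/n ≤ r` then `etaUp n t + 1/n ≤ gridEta n r` -/
lemma etaUp_add_le_gridEta (hn : 1 ≤ n) {t r : ℝ} (h : etaUp n t + ((n:ℝ))⁻¹ ≤ r) :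
    etaUp n t + ((n:ℝ))⁻¹ ≤ gridEta n r := by
  have hp := npos hn
  have : etaUp n t + ((n:ℝ))⁻¹ = ((⌈(n:ℝ)*t⌉ + 1 : ℤ) : ℝ)/n := by
    rw [etaUp]; push_cast; rw [add_div]; congr 1; rw [one_div]
  rw [this] at h ⊢
  exact grid_le_gridEta hn h

/-- `r - 1/n < gridEta n r` -/
lemma sub_lt_gridEta (hn : 1 ≤ n) (r : ℝ) : r - ((n:ℝ))⁻¹ < gridEta n r := by
  have h := lt_gridEta_add hn r
  linarith


/-! integrability helpers -/

lemma II_sub_left {p : ℝ} (hp : -1 < p) (c a b : ℝ) :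
    IntervalIntegrable (fun r => (c - r) ^ p) volume a b := by
  have h := (intervalIntegrable_rpow' hp (a := c - a) (b := c - b)).comp_sub_left c
  simpa using h

lemma II_sub_right {p : ℝ} (hp : -1 < p) (c a b : ℝ) :
    IntervalIntegrable (fun r => (r - c) ^ p) volume a b := by
  have h := (intervalIntegrable_rpow' hp (a := a - c) (b := b - c)).comp_sub_right c
  simpa using h

lemma II_abs0 {p : ℝ} (hp : -1 < p) (a b : ℝ) :
    IntervalIntegrable (fun r : ℝ => |r| ^ p) volume a b := by
  suffices h : ∀ c : ℝ, IntervalIntegrable (fun r : ℝ => |r| ^ p) volume 0 c by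
    exact (h a).symm.trans (h b)
  intro c
  rcases le_total 0 c with hc | hc
  · rw [intervalIntegrable_iff_integrableOn_Ioc_of_le hc]
    apply ((intervalIntegrable_rpow' hp (a := 0) (b := c)).1).congr_fun _ measurableSet_Ioc
    intro x hx
    simp only []
    rw [abs_of_pos hx.1]
  · apply IntervalIntegrable.symm
    rw [intervalIntegrable_iff_integrableOn_Ioc_of_le hc]
    have h2 : IntervalIntegrable (fun r => (0 - r) ^ p) volume c 0 := II_sub_left hp 0 c 0
    rw [intervalIntegrable_iff_integrableOn_Ioc_of_le hc] at h2
    apply h2.congr_fun _ measurableSet_Ioc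
    intro x hx
    simp only []
    rw [zero_sub, abs_of_nonpos hx.2]

lemma II_abs {p : ℝ} (hp : -1 < p) (c a b : ℝ) :
    IntervalIntegrable (fun r => |r - c| ^ p) volume a b := by
  have h := (II_abs0 hp (a - c) (b - c)).comp_sub_right c
  simpa using h


/-! integral computations -/

lemma int_rpow_sub_left {p : ℝ} (hp : -1 < p) (c a b : ℝ) :
    ∫ r in a..b, (c - r) ^ p = ((c-a) ^ (p+1) - (c-b) ^ (p+1)) / (p+1) := by
  rw [intervalIntegral.integral_comp_sub_left (fun x => x ^ p) c,
    integral_rpow (Or.inl hp)]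

lemma int_rpow_sub_right {p : ℝ} (hp : -1 < p) (c a b : ℝ) :
    ∫ r in a..b, (r - c) ^ p = ((b-c) ^ (p+1) - (a-c) ^ (p+1)) / (p+1) := by
  rw [intervalIntegral.integral_comp_sub_right (fun x => x ^ p) c,
    integral_rpow (Or.inl hp)]

/-! indicator integral lemmas -/

lemma int_ind_Iic (q : ℝ) (h0q : 0 ≤ q) (hq1 : q ≤ 1) (h : ℝ → ℝ) :
    ∫ r in (0:ℝ)..1, (Iic q).indicator h r = ∫ r in (0:ℝ)..q, h r := by
  rw [intervalIntegral.integral_of_le (zero_le_one), intervalIntegral.integral_of_le h0q,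
    MeasureTheory.setIntegral_indicator measurableSet_Iic, Ioc_inter_Iic,
    min_eq_right hq1]

lemma int_ind_Icc_le {p q : ℝ} (hpq : p ≤ q) {h : ℝ → ℝ}
    (h0 : ∀ r ∈ Icc p q, 0 ≤ h r) (hint : IntegrableOn h (Icc p q) volume) :
    ∫ r in (0:ℝ)..1, (Icc p q).indicator h r ≤ ∫ r in Icc p q, h r := by
  rw [intervalIntegral.integral_of_le (zero_le_one),
    MeasureTheory.setIntegral_indicator measurableSet_Icc]
  apply MeasureTheory.setIntegral_mono_set hint
  · exact (ae_restrict_iff' measurableSet_Icc).2 (Filter.Eventually.of_forall h0)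
  · exact HasSubset.Subset.eventuallyLE inter_subset_right

lemma int_ind_Ioi (c : ℝ) (h0c : 0 ≤ c) (h : ℝ → ℝ) :
    ∫ r in (0:ℝ)..1, (Ioi c).indicator h r = ∫ r in Ioc c 1, h r := by
  rw [intervalIntegral.integral_of_le (zero_le_one),
    MeasureTheory.setIntegral_indicator measurableSet_Ioi, Ioc_inter_Ioi,
    max_eq_right h0c]

/-! subadditivity -/

lemma rpow_subadd (hH0 : 0 < H) (hH1 : H < 1/2) {x y : ℝ} (hx : 0 ≤ x) (hy : 0 ≤ y) :
    (x+y) ^ (2*H) ≤ x ^ (2*H) + y ^ (2*H) := by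
  have h := NNReal.rpow_add_le_add_rpow (p := 2*H) x.toNNReal y.toNNReal
    (by positivity) (by linarith)
  have h2 := NNReal.coe_le_coe.2 h
  push_cast [NNReal.coe_rpow] at h2
  rwa [Real.coe_toNNReal _ hx, Real.coe_toNNReal _ hy] at h2


/-! ## pointwise claims -/

lemma symK_nonneg (H t r : ℝ) : 0 ≤ symK H t r := Real.rpow_nonneg (abs_nonneg _) _

lemma claimS (hH1 : H < 1/2) (hn : 1 ≤ n) {s : ℝ} (r : ℝ) :
    -(deltaSymK H n s r) ≤ (Icc (gridEta n s) (gridEta n s + ((n:ℝ))⁻¹)).indicator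
      (fun x => |s - x| ^ (H - 1/2)) r := by
  have hps : gridEta n s ≤ s := gridEta_le hn s
  have hsp : s < gridEta n s + ((n:ℝ))⁻¹ := lt_gridEta_add hn s
  by_cases hr : r ∈ Icc (gridEta n s) (gridEta n s + ((n:ℝ))⁻¹)
  · rw [indicator_of_mem hr]
    have h1 : 0 ≤ symK' H n s r := add_nonneg (posPow_nonneg _ _) (posPow_nonneg _ _)
    have h2 : symK H s r = |s - r| ^ (H - 1/2) := rfl
    unfold deltaSymK
    linarith [h2.ge]
  · rw [indicator_of_notMem hr]
    suffices h : symK H s r ≤ symK' H n s r by unfold deltaSymK; linarith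
    rcases lt_or_ge r (gridEta n s) with hr1 | hge
    · -- r < gridEta n s
      have h3 : symK H s r = (s - r) ^ (H - 1/2) := by
        unfold symK; rw [abs_of_nonneg (by linarith)]
      have h4 : (s - r) ^ (H - 1/2) ≤ (gridEta n s - r) ^ (H - 1/2) :=
        rpow_anti hH1 (by linarith) (by linarith)
      have h5 : posPow H (gridEta n s - r) = (gridEta n s - r) ^ (H - 1/2) :=
        posPow_eq_rpow hH1 (by linarith)
      unfold symK'
      rw [h3, h5]
      linarith [posPow_nonneg H (gridEta n r - s)]
    · -- gridEta n s + 1/n < r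
      have hr2 : gridEta n s + ((n:ℝ))⁻¹ < r := by
        by_contra hc
        push_neg at hc
        exact hr ⟨hge, hc⟩
      have hg : gridEta n s + ((n:ℝ))⁻¹ ≤ gridEta n r := by
        have hid : gridEta n s + ((n:ℝ))⁻¹ = ((⌊(n:ℝ)*s⌋ + 1 : ℤ) : ℝ)/n := by
          rw [gridEta]; push_cast; rw [add_div, one_div]
        rw [hid]
        exact grid_le_gridEta hn (by rw [← hid]; linarith)
      have hsr : s < r := by linarith
      have h3 : symK H s r = (r - s) ^ (H - 1/2) := by
        unfold symK; rw [abs_of_nonpos (by linarith), neg_sub]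
      have hgr : gridEta n r ≤ r := gridEta_le hn r
      have h4 : (r - s) ^ (H - 1/2) ≤ (gridEta n r - s) ^ (H - 1/2) :=
        rpow_anti hH1 (by linarith) (by linarith)
      have h5 : posPow H (gridEta n r - s) = (gridEta n r - s) ^ (H - 1/2) :=
        posPow_eq_rpow hH1 (by linarith)
      unfold symK'
      rw [h3]
      have := posPow_nonneg H (gridEta n s - r)
      rw [h5] at *
      linarith


lemma claimT (hH0 : 0 < H) (hH1 : H < 1/2) (hn : 1 ≤ n) (t r : ℝ) :
    symK H t r * deltaSymK H n t r ≤
      (Iic (gridEta n t)).indicator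
        (fun x => (gridEta n t - x) ^ (2*H-1) - (t - x) ^ (2*H-1)) r
      + (Icc (etaUp n t) (etaUp n t + ((n:ℝ))⁻¹)).indicator
        (fun x => (etaUp n t - t) ^ (H-1/2) * (x - t) ^ (H-1/2)) r
      + (Ioi (etaUp n t + ((n:ℝ))⁻¹)).indicator
        (fun x => (x - ((n:ℝ))⁻¹ - t) ^ (2*H-1) - (x - t) ^ (2*H-1)) r := by
  have hp := npos hn
  have hδ : (0:ℝ) < ((n:ℝ))⁻¹ := by positivity
  set b := gridEta n t with hbdef
  set u := etaUp n t with hudef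
  set δ := ((n:ℝ))⁻¹ with hδdef
  have hbt : b ≤ t := gridEta_le hn t
  have htu : t ≤ u := le_etaUp hn t
  have hg2nn : (0:ℝ) ≤ (Icc u (u + δ)).indicator
      (fun x => (u - t) ^ (H-1/2) * (x - t) ^ (H-1/2)) r := by
    apply indicator_nonneg
    intro x hx
    exact mul_nonneg (Real.rpow_nonneg (by linarith) _)
      (Real.rpow_nonneg (by linarith [hx.1]) _)
  have hg3nn : (0:ℝ) ≤ (Ioi (u + δ)).indicator
      (fun x => (x - δ - t) ^ (2*H-1) - (x - t) ^ (2*H-1)) r := by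
    apply indicator_nonneg
    intro x hx
    have hx1 : u + δ < x := hx
    have h1 : 0 < x - δ - t := by linarith
    exact sub_nonneg.2 (rpow_anti' hH1 h1 (by linarith))
  rcases le_or_gt r b with hrb | hrb
  · -- region 1 : r ≤ b
    rw [indicator_of_mem (mem_Iic.2 hrb)]
    have hgr : gridEta n r ≤ r := gridEta_le hn r
    have hKp : symK' H n t r = (b - r) ^ (H - 1/2) := by
      unfold symK'
      rw [← hbdef, posPow_eq_rpow hH1 (by linarith : (0:ℝ) ≤ b - r),
        posPow_of_nonpos (by linarith : gridEta n r - t ≤ 0), add_zero]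
    have hK : symK H t r = (t - r) ^ (H - 1/2) := by
      unfold symK; rw [abs_of_nonneg (by linarith)]
    have key : (t-r) ^ (H-1/2) * (b-r) ^ (H-1/2) ≤ (b-r) ^ (2*H-1) := by
      rcases eq_or_lt_of_le hrb with h | h
      · have hz : b - r = 0 := by rw [← h]; ring
        rw [hz, Real.zero_rpow (by intro hc; nlinarith), Real.zero_rpow (by intro hc; nlinarith),
          mul_zero]
      · have h1 : (t-r) ^ (H-1/2) ≤ (b-r) ^ (H-1/2) := rpow_anti hH1 (by linarith) (by linarith)
        calc (t-r) ^ (H-1/2) * (b-r) ^ (H-1/2)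
            ≤ (b-r) ^ (H-1/2) * (b-r) ^ (H-1/2) :=
              mul_le_mul_of_nonneg_right h1 (Real.rpow_nonneg (by linarith) _)
          _ = (b-r) ^ (2*H-1) := sq_rpow hH1 (by linarith)
    have hsq : (t-r) ^ (H-1/2) * (t-r) ^ (H-1/2) = (t-r) ^ (2*H-1) := sq_rpow hH1 (by linarith)
    unfold deltaSymK
    rw [hKp, hK, mul_sub, hsq]
    linarith
  · have hg1z : (Iic b).indicator
        (fun x => (b - x) ^ (2*H-1) - (t - x) ^ (2*H-1)) r = 0 :=
      indicator_of_notMem (by simp only [mem_Iic, not_le]; exact hrb) _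
    rcases le_or_gt r (u + δ) with hru | hru
    · -- region 2 : b < r ≤ u + δ
      have hg3z : (Ioi (u + δ)).indicator
          (fun x => (x - δ - t) ^ (2*H-1) - (x - t) ^ (2*H-1)) r = 0 :=
        indicator_of_notMem (by simp only [mem_Ioi, not_lt]; exact hru) _
      rw [hg1z, hg3z, zero_add, add_zero]
      have hbr : posPow H (b - r) = 0 := posPow_of_nonpos (by linarith)
      by_cases hgr : gridEta n r ≤ t
      · -- Δ ≤ 0
        have hK'z : symK' H n t r = 0 := by
          unfold symK'; rw [← hbdef, hbr, posPow_of_nonpos (by linarith), add_zero]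
        have hΔ : deltaSymK H n t r ≤ 0 := by
          unfold deltaSymK; rw [hK'z]; linarith [symK_nonneg H t r]
        have : symK H t r * deltaSymK H n t r ≤ 0 :=
          mul_nonpos_of_nonneg_of_nonpos (symK_nonneg H t r) hΔ
        exact this.trans hg2nn
      · push_neg at hgr
        have h2 : gridEta n r ≤ r := gridEta_le hn r
        have h1 : u ≤ gridEta n r := etaUp_le_gridEta hn hgr
        have hmem : r ∈ Icc u (u + δ) := ⟨h1.trans h2, hru⟩
        rw [indicator_of_mem hmem]
        have hrt : t < r := lt_of_lt_of_le hgr h2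
        have hK : symK H t r = (r - t) ^ (H-1/2) := by
          unfold symK; rw [abs_of_nonpos (by linarith), neg_sub]
        have hK' : symK' H n t r = (gridEta n r - t) ^ (H-1/2) := by
          unfold symK'; rw [← hbdef, hbr, zero_add, posPow_eq_rpow hH1 (by linarith)]
        rcases lt_or_ge t u with het | het
        · have h3 : (gridEta n r - t) ^ (H-1/2) ≤ (u - t) ^ (H-1/2) :=
            rpow_anti hH1 (by linarith) (by linarith)
          unfold deltaSymK
          rw [hK', hK, mul_sub]
          have h6 : (r-t) ^ (H-1/2) * (gridEta n r - t) ^ (H-1/2)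
              ≤ (r-t) ^ (H-1/2) * (u - t) ^ (H-1/2) :=
            mul_le_mul_of_nonneg_left h3 (Real.rpow_nonneg (by linarith) _)
          have h7 : 0 ≤ (r-t) ^ (H-1/2) * (r-t) ^ (H-1/2) :=
            mul_nonneg (Real.rpow_nonneg (by linarith) _) (Real.rpow_nonneg (by linarith) _)
          calc (r-t) ^ (H-1/2) * (gridEta n r - t) ^ (H-1/2)
                - (r-t) ^ (H-1/2) * (r-t) ^ (H-1/2)
              ≤ (r-t) ^ (H-1/2) * (u - t) ^ (H-1/2) := by linarith
            _ = (u - t) ^ (H-1/2) * (r-t) ^ (H-1/2) := mul_comm _ _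
        · -- u = t (grid point)
          have hut : u = t := le_antisymm het htu
          have hcl : u = ((⌈(n:ℝ)*t⌉ : ℤ) : ℝ)/n := by rw [hudef]; rfl
          have h5 : t + δ ≤ gridEta n r := by
            obtain ⟨k, hk⟩ := gridEta_mul_int hn r
            have hlt : ((⌈(n:ℝ)*t⌉ : ℤ) : ℝ)/n < (k:ℝ)/n := by
              rw [← hcl, hut, ← hk]; exact hgr
            have hik : (⌈(n:ℝ)*t⌉ : ℤ) < k := by
              have := (div_lt_div_iff_of_pos_right hp).1 hlt
              exact_mod_cast this
            have hik1 : (⌈(n:ℝ)*t⌉ : ℤ) + 1 ≤ k := hik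
            have hle : ((⌈(n:ℝ)*t⌉ + 1 : ℤ) : ℝ)/n ≤ (k:ℝ)/n := by
              apply (div_le_div_iff_of_pos_right hp).2
              exact_mod_cast hik1
            have ht' : t = ((⌈(n:ℝ)*t⌉ : ℤ) : ℝ)/n := by push_cast at hcl ⊢; linarith [hcl, hut]
            have ht5 : t + δ = ((⌈(n:ℝ)*t⌉ + 1 : ℤ) : ℝ)/n := by
              rw [hδdef]; push_cast; rw [add_div, one_div]; linarith
            rw [ht5, hk]
            exact hle
          rw [hut] at hru
          have h7 : gridEta n r = r := le_antisymm h2 (by linarith)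
          unfold deltaSymK
          rw [hK', hK, h7, sub_self, mul_zero]
          exact mul_nonneg (Real.rpow_nonneg (by linarith) _)
            (Real.rpow_nonneg (by linarith) _)
    · -- region 3 : u + δ < r
      have hg2z : (Icc u (u + δ)).indicator
          (fun x => (u - t) ^ (H-1/2) * (x - t) ^ (H-1/2)) r = 0 :=
        indicator_of_notMem (by simp only [mem_Icc, not_and, not_le]; intro _; linarith) _
      rw [hg1z, hg2z, zero_add, zero_add, indicator_of_mem (mem_Ioi.2 hru)]
      have h1 : u + δ ≤ gridEta n r := etaUp_add_le_gridEta hn hru.le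
      have h2 : r - δ < gridEta n r := sub_lt_gridEta hn r
      have hrt : t + δ < r := by linarith
      have hηt : t < gridEta n r := by linarith
      have hbr : posPow H (b - r) = 0 := posPow_of_nonpos (by linarith)
      have hK : symK H t r = (r - t) ^ (H-1/2) := by
        unfold symK; rw [abs_of_nonpos (by linarith), neg_sub]
      have hK' : symK' H n t r = (gridEta n r - t) ^ (H-1/2) := by
        unfold symK'; rw [← hbdef, hbr, zero_add, posPow_eq_rpow hH1 (by linarith)]
      have h3 : (gridEta n r - t) ^ (H-1/2) ≤ (r - δ - t) ^ (H-1/2) :=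
        rpow_anti hH1 (by linarith) (by linarith)
      have h4 : (r - t) ^ (H-1/2) ≤ (r - δ - t) ^ (H-1/2) :=
        rpow_anti hH1 (by linarith) (by linarith)
      have h5 : (r-t) ^ (H-1/2) * (gridEta n r - t) ^ (H-1/2) ≤ (r-δ-t) ^ (2*H-1) := by
        calc (r-t) ^ (H-1/2) * (gridEta n r - t) ^ (H-1/2)
            ≤ (r-δ-t) ^ (H-1/2) * (r-δ-t) ^ (H-1/2) :=
              mul_le_mul h4 h3 (Real.rpow_nonneg (by linarith) _)
                (Real.rpow_nonneg (by linarith) _)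
          _ = (r-δ-t) ^ (2*H-1) := sq_rpow hH1 (by linarith)
      unfold deltaSymK
      rw [hK', hK, mul_sub, sq_rpow hH1 (by linarith : (0:ℝ) ≤ r - t)]
      linarith


/-! ## integral bounds -/

lemma boundJ1 (hH0 : 0 < H) (hH1 : H < 1/2) (hn : 1 ≤ n) {t : ℝ} (ht0 : 0 ≤ t) (ht1 : t ≤ 1) :
    ∫ r in (0:ℝ)..1, (Iic (gridEta n t)).indicator
        (fun x => (gridEta n t - x) ^ (2*H-1) - (t - x) ^ (2*H-1)) r
      ≤ ((n:ℝ)⁻¹) ^ (2*H) / (2*H) := by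
  have h2H : (0:ℝ) < 2*H := by linarith
  have h2α : (-1:ℝ) < 2*H-1 := by linarith
  set b := gridEta n t with hbdef
  have hb0 : 0 ≤ b := gridEta_nonneg hn ht0
  have hbt : b ≤ t := gridEta_le hn t
  have hb1 : b ≤ 1 := hbt.trans ht1
  have htb : t - b ≤ (n:ℝ)⁻¹ := by linarith [lt_gridEta_add hn t]
  rw [int_ind_Iic b hb0 hb1,
    intervalIntegral.integral_sub (II_sub_left h2α b 0 b) (II_sub_left h2α t 0 b),
    int_rpow_sub_left h2α b 0 b, int_rpow_sub_left h2α t 0 b]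
  have he : 2*H-1+1 = 2*H := by ring
  rw [he, sub_self, sub_zero, sub_zero, Real.zero_rpow (ne_of_gt h2H)]
  rw [div_sub_div_same]
  apply (div_le_div_iff_of_pos_right h2H).2
  have h1 : b ^ (2*H) ≤ t ^ (2*H) := Real.rpow_le_rpow hb0 hbt h2H.le
  have h2 : (t - b) ^ (2*H) ≤ ((n:ℝ)⁻¹) ^ (2*H) := Real.rpow_le_rpow (by linarith) htb h2H.le
  linarith


lemma epsFn_nonneg (hH1 : H < 1/2) (hn : 1 ≤ n) (t : ℝ) : 0 ≤ epsFn H n t := by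
  unfold epsFn
  split
  · exact le_refl 0
  · apply mul_nonneg (Real.rpow_nonneg (by positivity) _)
    apply Real.rpow_nonneg
    have := le_etaUp hn t
    rw [etaUp] at this
    linarith

lemma eps_eq (hH1 : H < 1/2) (hn : 1 ≤ n) (t : ℝ) :
    ((n:ℝ)⁻¹) ^ (H+1/2) * (etaUp n t - t) ^ (H-1/2) = (n:ℝ) ^ (-H) * epsFn H n t := by
  have hp := npos hn
  unfold epsFn
  by_cases hg : ∃ m : ℤ, (n : ℝ) * t = m
  · rw [if_pos hg]
    obtain ⟨m, hm⟩ := hg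
    have he : etaUp n t = t := by
      rw [etaUp, hm, Int.ceil_intCast]
      field_simp
      linarith [hm]
    rw [he, sub_self, Real.zero_rpow (by intro hc; nlinarith), mul_zero, mul_zero]
  · rw [if_neg hg]
    have h1 : ((n:ℝ)⁻¹) ^ (H+1/2) = (n:ℝ) ^ (-H) * (n:ℝ) ^ (-(1/2):ℝ) := by
      rw [← Real.rpow_add hp]
      rw [Real.inv_rpow hp.le, ← Real.rpow_neg hp.le]
      congr 1; ring
    rw [h1]
    have he2 : etaUp n t - t = (⌈(n:ℝ)*t⌉ : ℝ)/n - t := by rw [etaUp]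
    rw [he2]; ring

lemma boundJ2 (hH0 : 0 < H) (hH1 : H < 1/2) (hn : 1 ≤ n) (t : ℝ) :
    ∫ r in (0:ℝ)..1, (Icc (etaUp n t) (etaUp n t + ((n:ℝ))⁻¹)).indicator
        (fun x => (etaUp n t - t) ^ (H-1/2) * (x - t) ^ (H-1/2)) r
      ≤ 4 * ((n:ℝ) ^ (-H) * epsFn H n t) := by
  have hp := npos hn
  have hδ : (0:ℝ) < ((n:ℝ))⁻¹ := by positivity
  have hα : (-1:ℝ) < H - 1/2 := by linarith
  set u := etaUp n t with hudef
  set δ := ((n:ℝ))⁻¹ with hδdef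
  have htu : t ≤ u := le_etaUp hn t
  have hud : u < t + δ := etaUp_lt hn t
  set e := u - t with hedef
  have he0 : 0 ≤ e := by linarith
  have heδ : e < δ := by linarith
  have hEnn : 0 ≤ e ^ (H-1/2) := Real.rpow_nonneg he0 _
  have step1 : ∫ r in (0:ℝ)..1, (Icc u (u + δ)).indicator
      (fun x => e ^ (H-1/2) * (x - t) ^ (H-1/2)) r
      ≤ ∫ r in Icc u (u + δ), e ^ (H-1/2) * (r - t) ^ (H-1/2) := by
    apply int_ind_Icc_le (by linarith)
    · intro x hx
      exact mul_nonneg hEnn (Real.rpow_nonneg (by linarith [hx.1]) _)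
    · rw [integrableOn_Icc_iff_integrableOn_Ioc]
      exact ((II_sub_right hα t u (u+δ)).const_mul _).1
  refine step1.trans ?_
  rw [MeasureTheory.integral_Icc_eq_integral_Ioc,
    ← intervalIntegral.integral_of_le (by linarith : u ≤ u + δ),
    intervalIntegral.integral_const_mul, int_rpow_sub_right hα t u (u+δ)]
  have he' : H - 1/2 + 1 = H + 1/2 := by ring
  rw [he']
  have hb1 : (u + δ - t) ^ (H+1/2) ≤ (2*δ) ^ (H+1/2) :=
    Real.rpow_le_rpow (by linarith) (by linarith) (by linarith)
  have hb2 : (2*δ) ^ (H+1/2) = 2 ^ (H+1/2) * δ ^ (H+1/2) :=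
    Real.mul_rpow (by norm_num) hδ.le
  have hb3 : (2:ℝ) ^ (H+1/2) ≤ 2 := by
    calc (2:ℝ) ^ (H+1/2) ≤ 2 ^ (1:ℝ) :=
      Real.rpow_le_rpow_of_exponent_le one_le_two (by linarith)
    _ = 2 := Real.rpow_one 2
  have hb4 : 0 ≤ (u - t) ^ (H+1/2) := Real.rpow_nonneg (by linarith) _
  have hδp : 0 ≤ δ ^ (H+1/2) := Real.rpow_nonneg hδ.le _
  rw [← mul_div_assoc]
  have key : e ^ (H-1/2) * ((u + δ - t) ^ (H+1/2) - (u - t) ^ (H+1/2)) / (H+1/2)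
      ≤ 4 * (δ ^ (H+1/2) * e ^ (H-1/2)) := by
    have hH2 : (1:ℝ)/2 ≤ H + 1/2 := by linarith
    have h5 : e ^ (H-1/2) * ((u + δ - t) ^ (H+1/2) - (u - t) ^ (H+1/2))
        ≤ e ^ (H-1/2) * (2 * δ ^ (H+1/2)) := by
      apply mul_le_mul_of_nonneg_left _ hEnn
      nlinarith
    have h6 : 0 < H + 1/2 := by linarith
    rw [div_le_iff₀ h6]
    nlinarith [mul_nonneg hEnn hδp]
  refine key.trans ?_
  rw [← eps_eq hH1 hn t, ← hudef, ← hedef, ← hδdef]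


lemma boundJ3 (hH0 : 0 < H) (hH1 : H < 1/2) (hn : 1 ≤ n) {t : ℝ} (ht0 : 0 ≤ t) :
    ∫ r in (0:ℝ)..1, (Ioi (etaUp n t + ((n:ℝ))⁻¹)).indicator
        (fun x => (x - ((n:ℝ))⁻¹ - t) ^ (2*H-1) - (x - t) ^ (2*H-1)) r
      ≤ 2 * ((n:ℝ)⁻¹) ^ (2*H) / (2*H) := by
  have hp := npos hn
  have hδ : (0:ℝ) < ((n:ℝ))⁻¹ := by positivity
  have h2H : (0:ℝ) < 2*H := by linarith
  have h2α : (-1:ℝ) < 2*H-1 := by linarith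
  set u := etaUp n t with hudef
  set δ := ((n:ℝ))⁻¹ with hδdef
  have htu : t ≤ u := le_etaUp hn t
  have hud : u < t + δ := etaUp_lt hn t
  have hDnn : 0 ≤ δ ^ (2*H) := Real.rpow_nonneg hδ.le _
  rw [int_ind_Ioi (u + δ) (by linarith) _]
  rcases le_or_gt (u + δ) 1 with hc | hc
  · rw [← intervalIntegral.integral_of_le hc]
    have hrw : ∀ x : ℝ, x - δ - t = x - (δ + t) := fun x => by ring
    simp only [hrw]
    rw [intervalIntegral.integral_sub (II_sub_right h2α (δ+t) (u+δ) 1)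
        (II_sub_right h2α t (u+δ) 1),
      int_rpow_sub_right h2α (δ+t) (u+δ) 1, int_rpow_sub_right h2α t (u+δ) 1]
    have he : 2*H-1+1 = 2*H := by ring
    rw [he, div_sub_div_same]
    rw [show (2:ℝ) * δ ^ (2*H) / (2*H) = (2 * δ ^ (2*H)) / (2*H) by ring]
    apply (div_le_div_iff_of_pos_right h2H).2
    have h1 : (1 - (δ+t)) ^ (2*H) ≤ (1 - t) ^ (2*H) :=
      Real.rpow_le_rpow (by linarith) (by linarith) h2H.le
    have h2 : 0 ≤ (u + δ - (δ+t)) ^ (2*H) := Real.rpow_nonneg (by linarith) _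
    have h3 : (u + δ - t) ^ (2*H) ≤ (2*δ) ^ (2*H) :=
      Real.rpow_le_rpow (by linarith) (by linarith) h2H.le
    have h4 : (2*δ) ^ (2*H) = 2 ^ (2*H) * δ ^ (2*H) := Real.mul_rpow (by norm_num) hδ.le
    have h5 : (2:ℝ) ^ (2*H) ≤ 2 := by
      calc (2:ℝ) ^ (2*H) ≤ 2 ^ (1:ℝ) :=
        Real.rpow_le_rpow_of_exponent_le one_le_two (by linarith)
      _ = 2 := Real.rpow_one 2
    nlinarith
  · rw [Ioc_eq_empty (by linarith), MeasureTheory.setIntegral_empty]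
    positivity

lemma int_abs_le (hH0 : 0 < H) (hH1 : H < 1/2) {c pL pR L M : ℝ}
    (h1 : c - L ≤ pL) (h2 : pL ≤ pR) (h3 : pR ≤ c + M) (hL : 0 ≤ L) (hM : 0 ≤ M) :
    ∫ x in pL..pR, |x - c| ^ (2*H-1) ≤ (L ^ (2*H) + M ^ (2*H))/(2*H) := by
  have h2H : (0:ℝ) < 2*H := by linarith
  have h2α : (-1:ℝ) < 2*H-1 := by linarith
  have step1 : ∫ x in pL..pR, |x - c| ^ (2*H-1) ≤ ∫ x in (c-L)..(c+M), |x - c| ^ (2*H-1) := by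
    apply intervalIntegral.integral_mono_interval h1 h2 h3
    · exact Filter.Eventually.of_forall fun x => Real.rpow_nonneg (abs_nonneg _) _
    · exact II_abs h2α c (c-L) (c+M)
  refine step1.trans ?_
  rw [← intervalIntegral.integral_add_adjacent_intervals
    (II_abs h2α c (c-L) c) (II_abs h2α c c (c+M))]
  have e1 : ∫ x in (c-L)..c, |x - c| ^ (2*H-1) = ∫ x in (c-L)..c, (c - x) ^ (2*H-1) := by
    apply intervalIntegral.integral_congr
    intro x hx
    rw [uIcc_of_le (by linarith)] at hx
    simp only []
    rw [abs_sub_comm, abs_of_nonneg (by linarith [hx.2] : 0 ≤ c - x)]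
  have e2 : ∫ x in c..(c+M), |x - c| ^ (2*H-1) = ∫ x in c..(c+M), (x - c) ^ (2*H-1) := by
    apply intervalIntegral.integral_congr
    intro x hx
    rw [uIcc_of_le (by linarith)] at hx
    simp only []
    rw [abs_of_nonneg (by linarith [hx.1] : 0 ≤ x - c)]
  rw [e1, e2, int_rpow_sub_left h2α c (c-L) c, int_rpow_sub_right h2α c c (c+M)]
  have he : 2*H-1+1 = 2*H := by ring
  rw [he]
  have hz1 : c - (c - L) = L := by ring
  have hz2 : c + M - c = M := by ring
  rw [hz1, hz2, sub_self c, Real.zero_rpow (ne_of_gt h2H), sub_zero, sub_zero, ← add_div]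


/-- pointwise AM-GM for the product kernel -/
lemma amgm_abs (hH1 : H < 1/2) (t s x : ℝ) :
    |t - x| ^ (H-1/2) * |s - x| ^ (H-1/2)
      ≤ (1/2) * (|x - t| ^ (2*H-1) + |x - s| ^ (2*H-1)) := by
  have e1 : |t - x| = |x - t| := abs_sub_comm _ _
  have e2 : |s - x| = |x - s| := abs_sub_comm _ _
  rw [e1, e2]
  have h1 : |x - t| ^ (H-1/2) * |x - t| ^ (H-1/2) = |x - t| ^ (2*H-1) :=
    sq_rpow hH1 (abs_nonneg _)
  have h2 : |x - s| ^ (H-1/2) * |x - s| ^ (H-1/2) = |x - s| ^ (2*H-1) :=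
    sq_rpow hH1 (abs_nonneg _)
  nlinarith [sq_nonneg (|x - t| ^ (H-1/2) - |x - s| ^ (H-1/2)),
    Real.rpow_nonneg (abs_nonneg (x - t)) (H-1/2), Real.rpow_nonneg (abs_nonneg (x - s)) (H-1/2)]

lemma boundJ4 (hH0 : 0 < H) (hH1 : H < 1/2) (hn : 1 ≤ n) {s t : ℝ}
    (hs0 : 0 ≤ s) (hst : s ≤ t) :
    ∫ r in (0:ℝ)..1, (Icc (gridEta n s) (gridEta n s + ((n:ℝ))⁻¹)).indicator
        (fun x => |t - x| ^ (H-1/2) * |s - x| ^ (H-1/2)) r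
      ≤ ((t-s) ^ (2*H) + 4 * ((n:ℝ)⁻¹) ^ (2*H)) / (2*H) := by
  have hp := npos hn
  have hδ : (0:ℝ) < ((n:ℝ))⁻¹ := by positivity
  have h2H : (0:ℝ) < 2*H := by linarith
  have hα : (-1:ℝ) < H - 1/2 := by linarith
  have h2α : (-1:ℝ) < 2*H-1 := by linarith
  set p := gridEta n s with hpdef
  set δ := ((n:ℝ))⁻¹ with hδdef
  have hps : p ≤ s := gridEta_le hn s
  have hsp : s < p + δ := lt_gridEta_add hn s
  -- integrability of the product on [p, p+δ]
  have habs1 : IntervalIntegrable (fun x => |t - x| ^ (H-1/2)) volume p (p+δ) := by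
    have h := II_abs hα t p (p+δ)
    have : (fun x : ℝ => |x - t| ^ (H-1/2)) = fun x => |t - x| ^ (H-1/2) :=
      funext fun x => by rw [abs_sub_comm]
    rwa [this] at h
  have habs2 : IntervalIntegrable (fun x => |s - x| ^ (H-1/2)) volume p (p+δ) := by
    have h := II_abs hα s p (p+δ)
    have : (fun x : ℝ => |x - s| ^ (H-1/2)) = fun x => |s - x| ^ (H-1/2) :=
      funext fun x => by rw [abs_sub_comm]
    rwa [this] at h
  have hψ : IntervalIntegrable
      (fun x => (1/2) * (|x - t| ^ (2*H-1) + |x - s| ^ (2*H-1))) volume p (p+δ) :=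
    ((II_abs h2α t p (p+δ)).add (II_abs h2α s p (p+δ))).const_mul _
  have hprod : IntegrableOn (fun x => |t - x| ^ (H-1/2) * |s - x| ^ (H-1/2))
      (Ioc p (p+δ)) volume := by
    apply Integrable.mono' (hψ.1)
    · exact (habs1.1.aestronglyMeasurable).mul (habs2.1.aestronglyMeasurable)
    · apply Filter.Eventually.of_forall
      intro x
      rw [Real.norm_eq_abs, abs_of_nonneg
        (mul_nonneg (Real.rpow_nonneg (abs_nonneg _) _) (Real.rpow_nonneg (abs_nonneg _) _))]
      exact amgm_abs hH1 t s x
  have hprodI : IntervalIntegrable (fun x => |t - x| ^ (H-1/2) * |s - x| ^ (H-1/2))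
      volume p (p+δ) := by
    rw [intervalIntegrable_iff_integrableOn_Ioc_of_le (by linarith)]
    exact hprod
  have step1 : ∫ r in (0:ℝ)..1, (Icc p (p + δ)).indicator
      (fun x => |t - x| ^ (H-1/2) * |s - x| ^ (H-1/2)) r
      ≤ ∫ r in Icc p (p + δ), |t - r| ^ (H-1/2) * |s - r| ^ (H-1/2) := by
    apply int_ind_Icc_le (by linarith)
    · intro x _
      exact mul_nonneg (Real.rpow_nonneg (abs_nonneg _) _) (Real.rpow_nonneg (abs_nonneg _) _)
    · rw [integrableOn_Icc_iff_integrableOn_Ioc]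
      exact hprod
  refine step1.trans ?_
  rw [MeasureTheory.integral_Icc_eq_integral_Ioc,
    ← intervalIntegral.integral_of_le (by linarith : p ≤ p + δ)]
  have step2 : ∫ r in p..(p+δ), |t - r| ^ (H-1/2) * |s - r| ^ (H-1/2)
      ≤ ∫ r in p..(p+δ), (1/2) * (|r - t| ^ (2*H-1) + |r - s| ^ (2*H-1)) := by
    apply intervalIntegral.integral_mono_on (by linarith) hprodI hψ
    intro x _
    exact amgm_abs hH1 t s x
  refine step2.trans ?_
  rw [intervalIntegral.integral_const_mul,
    intervalIntegral.integral_add (II_abs h2α t p (p+δ)) (II_abs h2α s p (p+δ))]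
  have hb1 : ∫ x in p..(p+δ), |x - t| ^ (2*H-1)
      ≤ ((t - s + δ) ^ (2*H) + δ ^ (2*H))/(2*H) :=
    int_abs_le hH0 hH1 (by linarith) (by linarith) (by linarith) (by linarith) (by linarith)
  have hb2 : ∫ x in p..(p+δ), |x - s| ^ (2*H-1) ≤ (δ ^ (2*H) + δ ^ (2*H))/(2*H) :=
    int_abs_le hH0 hH1 (by linarith) (by linarith) (by linarith) (by linarith) (by linarith)
  have hsub : (t - s + δ) ^ (2*H) ≤ (t-s) ^ (2*H) + δ ^ (2*H) :=
    rpow_subadd hH0 hH1 (by linarith) hδ.le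
  have hd1 : ((t - s + δ) ^ (2*H) + δ ^ (2*H))/(2*H)
      ≤ ((t-s) ^ (2*H) + 2 * δ ^ (2*H))/(2*H) :=
    (div_le_div_iff_of_pos_right h2H).2 (by linarith)
  have hfin : (1:ℝ)/2 * (((t-s) ^ (2*H) + 2 * δ ^ (2*H))/(2*H) + (δ ^ (2*H) + δ ^ (2*H))/(2*H))
      ≤ ((t-s) ^ (2*H) + 4 * δ ^ (2*H)) / (2*H) := by
    rw [← add_div]
    rw [show (1:ℝ)/2 * (((t-s) ^ (2*H) + 2 * δ ^ (2*H) + (δ ^ (2*H) + δ ^ (2*H)))/(2*H))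
      = ((t-s) ^ (2*H) + 2 * δ ^ (2*H) + (δ ^ (2*H) + δ ^ (2*H)))/2 / (2*H) by ring]
    apply (div_le_div_iff_of_pos_right h2H).2
    have : 0 ≤ (t-s) ^ (2*H) := Real.rpow_nonneg (by linarith) _
    have : 0 ≤ δ ^ (2*H) := Real.rpow_nonneg hδ.le _
    linarith
  calc (1:ℝ)/2 * ((∫ x in p..(p+δ), |x - t| ^ (2*H-1)) + ∫ x in p..(p+δ), |x - s| ^ (2*H-1))
      ≤ (1:ℝ)/2 * (((t-s) ^ (2*H) + 2 * δ ^ (2*H))/(2*H) + (δ ^ (2*H) + δ ^ (2*H))/(2*H)) := by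
        have hh := hb1.trans hd1
        have nn : 0 ≤ (1:ℝ)/2 := by norm_num
        apply mul_le_mul_of_nonneg_left _ nn
        linarith
    _ ≤ ((t-s) ^ (2*H) + 4 * δ ^ (2*H)) / (2*H) := hfin


/-! ## integrability of pieces on [0,1] -/

lemma II01 {f g : ℝ → ℝ} (hg : IntervalIntegrable g volume 0 1)
    (hm : AEStronglyMeasurable f (volume.restrict (Ioc (0:ℝ) 1)))
    (hb : ∀ x ∈ Ioc (0:ℝ) 1, |f x| ≤ |g x|) : IntervalIntegrable f volume 0 1 := by
  apply hg.mono_fun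
  · rwa [Set.uIoc_of_le (zero_le_one (α := ℝ))]
  · rw [Set.uIoc_of_le (zero_le_one (α := ℝ))]
    refine (ae_restrict_iff' measurableSet_Ioc).2 (Filter.Eventually.of_forall ?_)
    intro x hx
    simpa [Real.norm_eq_abs] using hb x hx

lemma aesm_sub_left {p : ℝ} (hp : -1 < p) (c : ℝ) :
    AEStronglyMeasurable (fun x : ℝ => (c - x) ^ p) (volume.restrict (Ioc (0:ℝ) 1)) :=
  (II_sub_left hp c 0 1).1.aestronglyMeasurable

lemma aesm_sub_right {p : ℝ} (hp : -1 < p) (c : ℝ) :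
    AEStronglyMeasurable (fun x : ℝ => (x - c) ^ p) (volume.restrict (Ioc (0:ℝ) 1)) :=
  (II_sub_right hp c 0 1).1.aestronglyMeasurable

lemma aesm_abs {p : ℝ} (hp : -1 < p) (c : ℝ) :
    AEStronglyMeasurable (fun x : ℝ => |c - x| ^ p) (volume.restrict (Ioc (0:ℝ) 1)) := by
  have h := (II_abs hp c 0 1).1.aestronglyMeasurable
  have e : (fun x : ℝ => |x - c| ^ p) = fun x => |c - x| ^ p :=
    funext fun x => by rw [abs_sub_comm]
  rwa [e] at h

lemma abs_sub_le_add {A B : ℝ} (hA : 0 ≤ A) (hB : 0 ≤ B) : |A - B| ≤ A + B :=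
  abs_le.2 ⟨by linarith, by linarith⟩

lemma hIg1 (hH0 : 0 < H) (hH1 : H < 1/2) (hn : 1 ≤ n) {t : ℝ} (ht0 : 0 ≤ t) :
    IntervalIntegrable (fun r => (Iic (gridEta n t)).indicator
      (fun x => (gridEta n t - x) ^ (2*H-1) - (t - x) ^ (2*H-1)) r) volume 0 1 := by
  have h2α : (-1:ℝ) < 2*H-1 := by linarith
  have hbt : gridEta n t ≤ t := gridEta_le hn t
  apply II01 ((II_abs h2α (gridEta n t) 0 1).add (II_abs h2α t 0 1))
  · exact ((aesm_sub_left h2α (gridEta n t)).sub (aesm_sub_left h2α t)).indicator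
      measurableSet_Iic
  · intro x _
    by_cases hx : x ∈ Iic (gridEta n t)
    · rw [indicator_of_mem hx]
      have h1 : (gridEta n t - x) ^ (2*H-1) = |x - gridEta n t| ^ (2*H-1) := by
        rw [abs_sub_comm, abs_of_nonneg (by exact sub_nonneg.2 hx)]
      have h2 : (t - x) ^ (2*H-1) = |x - t| ^ (2*H-1) := by
        rw [abs_sub_comm, abs_of_nonneg (by simp only [mem_Iic] at hx; linarith)]
      rw [h1, h2]
      have hA := Real.rpow_nonneg (abs_nonneg (x - gridEta n t)) (2*H-1)
      have hB := Real.rpow_nonneg (abs_nonneg (x - t)) (2*H-1)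
      calc |(|x - gridEta n t| ^ (2*H-1) - |x - t| ^ (2*H-1))|
          ≤ |x - gridEta n t| ^ (2*H-1) + |x - t| ^ (2*H-1) := abs_sub_le_add hA hB
        _ ≤ |(|x - gridEta n t| ^ (2*H-1) + |x - t| ^ (2*H-1))| := le_abs_self _
    · rw [indicator_of_notMem hx, abs_zero]
      exact abs_nonneg _
  
lemma hIg2 (hH0 : 0 < H) (hH1 : H < 1/2) (hn : 1 ≤ n) (t : ℝ) :
    IntervalIntegrable (fun r => (Icc (etaUp n t) (etaUp n t + ((n:ℝ))⁻¹)).indicator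
      (fun x => (etaUp n t - t) ^ (H-1/2) * (x - t) ^ (H-1/2)) r) volume 0 1 := by
  have hα : (-1:ℝ) < H-1/2 := by linarith
  have htu : t ≤ etaUp n t := le_etaUp hn t
  apply II01 ((II_abs hα t 0 1).const_mul ((etaUp n t - t) ^ (H-1/2)))
  · exact (aestronglyMeasurable_const.mul (aesm_sub_right hα t)).indicator measurableSet_Icc
  · intro x _
    by_cases hx : x ∈ Icc (etaUp n t) (etaUp n t + ((n:ℝ))⁻¹)
    · rw [indicator_of_mem hx]
      have hxt : t ≤ x := le_trans htu hx.1
      have h2 : (x - t) ^ (H-1/2) = |x - t| ^ (H-1/2) := by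
        rw [abs_of_nonneg (by linarith)]
      rw [h2, abs_of_nonneg (mul_nonneg (Real.rpow_nonneg (by linarith) _)
        (Real.rpow_nonneg (abs_nonneg _) _))]
    · rw [indicator_of_notMem hx, abs_zero]
      exact abs_nonneg _

lemma hIg3 (hH0 : 0 < H) (hH1 : H < 1/2) (hn : 1 ≤ n) {t : ℝ} (ht0 : 0 ≤ t) :
    IntervalIntegrable (fun r => (Ioi (etaUp n t + ((n:ℝ))⁻¹)).indicator
      (fun x => (x - ((n:ℝ))⁻¹ - t) ^ (2*H-1) - (x - t) ^ (2*H-1)) r) volume 0 1 := by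
  have h2α : (-1:ℝ) < 2*H-1 := by linarith
  have htu : t ≤ etaUp n t := le_etaUp hn t
  have hδ : (0:ℝ) < ((n:ℝ))⁻¹ := by positivity
  apply II01 ((II_abs h2α (((n:ℝ))⁻¹ + t) 0 1).add (II_abs h2α t 0 1))
  · have hm1 : AEStronglyMeasurable (fun x : ℝ => (x - ((n:ℝ))⁻¹ - t) ^ (2*H-1))
        (volume.restrict (Ioc (0:ℝ) 1)) := by
      have h := aesm_sub_right h2α (((n:ℝ))⁻¹ + t)
      simp only [show ∀ x:ℝ, x - (((n:ℝ))⁻¹ + t) = x - ((n:ℝ))⁻¹ - t from fun x => by ring] at h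
      exact h
    exact (hm1.sub (aesm_sub_right h2α t)).indicator measurableSet_Ioi
  · intro x _
    by_cases hx : x ∈ Ioi (etaUp n t + ((n:ℝ))⁻¹)
    · rw [indicator_of_mem hx]
      have hx1 : etaUp n t + ((n:ℝ))⁻¹ < x := hx
      have h1 : (x - ((n:ℝ))⁻¹ - t) ^ (2*H-1) = |x - (((n:ℝ))⁻¹ + t)| ^ (2*H-1) := by
        rw [abs_of_nonneg (by linarith),
          show x - (((n:ℝ))⁻¹ + t) = x - ((n:ℝ))⁻¹ - t by ring]
      have h2 : (x - t) ^ (2*H-1) = |x - t| ^ (2*H-1) := by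
        rw [abs_of_nonneg (by linarith)]
      rw [h1, h2]
      have hA := Real.rpow_nonneg (abs_nonneg (x - (((n:ℝ))⁻¹ + t))) (2*H-1)
      have hB := Real.rpow_nonneg (abs_nonneg (x - t)) (2*H-1)
      calc |(|x - (((n:ℝ))⁻¹ + t)| ^ (2*H-1) - |x - t| ^ (2*H-1))|
          ≤ |x - (((n:ℝ))⁻¹ + t)| ^ (2*H-1) + |x - t| ^ (2*H-1) := abs_sub_le_add hA hB
        _ ≤ |(|x - (((n:ℝ))⁻¹ + t)| ^ (2*H-1) + |x - t| ^ (2*H-1))| := le_abs_self _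
    · rw [indicator_of_notMem hx, abs_zero]
      exact abs_nonneg _

lemma hIg4 (hH0 : 0 < H) (hH1 : H < 1/2) (hn : 1 ≤ n) (s t : ℝ) :
    IntervalIntegrable (fun r => (Icc (gridEta n s) (gridEta n s + ((n:ℝ))⁻¹)).indicator
      (fun x => |t - x| ^ (H-1/2) * |s - x| ^ (H-1/2)) r) volume 0 1 := by
  have hα : (-1:ℝ) < H-1/2 := by linarith
  have h2α : (-1:ℝ) < 2*H-1 := by linarith
  apply II01 (((II_abs h2α t 0 1).add (II_abs h2α s 0 1)).const_mul (1/2))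
  · exact ((aesm_abs hα t).mul (aesm_abs hα s)).indicator measurableSet_Icc
  · intro x _
    by_cases hx : x ∈ Icc (gridEta n s) (gridEta n s + ((n:ℝ))⁻¹)
    · rw [indicator_of_mem hx]
      rw [abs_of_nonneg (mul_nonneg (Real.rpow_nonneg (abs_nonneg _) _)
        (Real.rpow_nonneg (abs_nonneg _) _))]
      calc |t - x| ^ (H-1/2) * |s - x| ^ (H-1/2)
          ≤ 1/2 * (|x - t| ^ (2*H-1) + |x - s| ^ (2*H-1)) := amgm_abs hH1 t s x
        _ ≤ |1/2 * (|x - t| ^ (2*H-1) + |x - s| ^ (2*H-1))| := le_abs_self _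
    · rw [indicator_of_notMem hx, abs_zero]
      exact abs_nonneg _


lemma delta_pow_eq (hn : 1 ≤ n) (H : ℝ) : ((n:ℝ)⁻¹) ^ (2*H) = (n:ℝ) ^ (-(2*H)) := by
  have hp := npos hn
  rw [Real.inv_rpow hp.le, ← Real.rpow_neg hp.le]

end Aux

/-- for `0 ≤ s ≤ t ≤ 1` and `n ≥ 1`,
`∫₀¹ |t-r|^(H-1/2) (ΔK̃(t,r) - ΔK̃(s,r)) dr ≤ C (n^(-2H) + (t-s)^(2H) + n^(-H)(ε(t)+ε(s)))`. -/
theorem deltaSymK_increment_covariance_bound (H : ℝ) (hH0 : 0 < H) (hH1 : H < 1/2) :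
    ∃ C > 0, ∀ n : ℕ, 1 ≤ n → ∀ s t : ℝ, 0 ≤ s → s ≤ t → t ≤ 1 →
      (∫ r in (0 : ℝ)..1, |t - r| ^ (H - 1/2) * (deltaSymK H n t r - deltaSymK H n s r))
        ≤ C * ((n : ℝ) ^ (-(2 * H)) + (t - s) ^ (2 * H)
            + (n : ℝ) ^ (-H) * (epsFn H n t + epsFn H n s)) := by
  have hC : (0:ℝ) < 4/H + 4 := by positivity
  refine ⟨4/H + 4, hC, ?_⟩
  intro n hn s t hs0 hst ht1
  have hp := npos hn
  have hδ : (0:ℝ) < ((n:ℝ))⁻¹ := by positivity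
  have ht0 : 0 ≤ t := hs0.trans hst
  have h2H : (0:ℝ) < 2*H := by linarith
  have hN : (0:ℝ) < (n:ℝ) ^ (-(2*H)) := Real.rpow_pos_of_pos hp _
  have hA : (0:ℝ) ≤ (t-s) ^ (2*H) := Real.rpow_nonneg (by linarith) _
  have hEt : (0:ℝ) ≤ (n:ℝ) ^ (-H) * epsFn H n t :=
    mul_nonneg (Real.rpow_nonneg hp.le _) (epsFn_nonneg hH1 hn t)
  have hEs : (0:ℝ) ≤ (n:ℝ) ^ (-H) * epsFn H n s :=
    mul_nonneg (Real.rpow_nonneg hp.le _) (epsFn_nonneg hH1 hn s)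
  by_cases hFint : IntervalIntegrable
      (fun r => |t - r| ^ (H - 1/2) * (deltaSymK H n t r - deltaSymK H n s r)) volume 0 1
  swap
  · rw [intervalIntegral.integral_undef hFint]
    have hmul : (0:ℝ) ≤ (n : ℝ) ^ (-(2 * H)) + (t - s) ^ (2 * H)
        + (n : ℝ) ^ (-H) * (epsFn H n t + epsFn H n s) := by
      rw [mul_add]; nlinarith
    positivity
  -- the four indicator pieces
  set g1 := fun r => (Iic (gridEta n t)).indicator
      (fun x => (gridEta n t - x) ^ (2*H-1) - (t - x) ^ (2*H-1)) r with hg1def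
  set g2 := fun r => (Icc (etaUp n t) (etaUp n t + ((n:ℝ))⁻¹)).indicator
      (fun x => (etaUp n t - t) ^ (H-1/2) * (x - t) ^ (H-1/2)) r with hg2def
  set g3 := fun r => (Ioi (etaUp n t + ((n:ℝ))⁻¹)).indicator
      (fun x => (x - ((n:ℝ))⁻¹ - t) ^ (2*H-1) - (x - t) ^ (2*H-1)) r with hg3def
  set g4 := fun r => (Icc (gridEta n s) (gridEta n s + ((n:ℝ))⁻¹)).indicator
      (fun x => |t - x| ^ (H-1/2) * |s - x| ^ (H-1/2)) r with hg4def
  have hI1 : IntervalIntegrable g1 volume 0 1 := hIg1 hH0 hH1 hn ht0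
  have hI2 : IntervalIntegrable g2 volume 0 1 := hIg2 hH0 hH1 hn t
  have hI3 : IntervalIntegrable g3 volume 0 1 := hIg3 hH0 hH1 hn ht0
  have hI4 : IntervalIntegrable g4 volume 0 1 := hIg4 hH0 hH1 hn s t
  have hmono : ∀ r ∈ Icc (0:ℝ) 1,
      |t - r| ^ (H - 1/2) * (deltaSymK H n t r - deltaSymK H n s r)
        ≤ g1 r + g2 r + g3 r + g4 r := by
    intro r _
    have hT := claimT (n := n) hH0 hH1 hn t r
    have hS := claimS (n := n) hH1 hn (s := s) r
    have hsymnn : 0 ≤ symK H t r := symK_nonneg H t r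
    have hS' : symK H t r * (-(deltaSymK H n s r)) ≤ g4 r := by
      have h1 : symK H t r * (-(deltaSymK H n s r))
          ≤ symK H t r * ((Icc (gridEta n s) (gridEta n s + ((n:ℝ))⁻¹)).indicator
            (fun x => |s - x| ^ (H - 1/2)) r) := mul_le_mul_of_nonneg_left hS hsymnn
      refine h1.trans ?_
      rw [hg4def]
      simp only []
      by_cases hr : r ∈ Icc (gridEta n s) (gridEta n s + ((n:ℝ))⁻¹)
      · rw [indicator_of_mem hr, indicator_of_mem hr]
        unfold symK
        exact le_refl _
      · rw [indicator_of_notMem hr, indicator_of_notMem hr, mul_zero]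
    have hexp : |t - r| ^ (H - 1/2) * (deltaSymK H n t r - deltaSymK H n s r)
        = symK H t r * deltaSymK H n t r + symK H t r * (-(deltaSymK H n s r)) := by
      unfold symK; ring
    rw [hexp]
    have := add_le_add hT hS'
    calc symK H t r * deltaSymK H n t r + symK H t r * (-(deltaSymK H n s r))
        ≤ (g1 r + g2 r + g3 r) + g4 r := add_le_add hT hS'
      _ = g1 r + g2 r + g3 r + g4 r := by ring
  have step1 : (∫ r in (0:ℝ)..1, |t - r| ^ (H - 1/2)
        * (deltaSymK H n t r - deltaSymK H n s r))
      ≤ ∫ r in (0:ℝ)..1, (g1 r + g2 r + g3 r + g4 r) := by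
    apply intervalIntegral.integral_mono_on zero_le_one hFint
      (((hI1.add hI2).add hI3).add hI4) hmono
  refine step1.trans ?_
  have hsplit : (∫ r in (0:ℝ)..1, (g1 r + g2 r + g3 r + g4 r))
      = (∫ r in (0:ℝ)..1, g1 r) + (∫ r in (0:ℝ)..1, g2 r)
        + (∫ r in (0:ℝ)..1, g3 r) + (∫ r in (0:ℝ)..1, g4 r) := by
    rw [intervalIntegral.integral_add ((hI1.add hI2).add hI3) hI4,
      intervalIntegral.integral_add (hI1.add hI2) hI3,
      intervalIntegral.integral_add hI1 hI2]
  rw [hsplit]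
  have hJ1 := boundJ1 (n := n) hH0 hH1 hn ht0 ht1
  have hJ2 := boundJ2 (n := n) hH0 hH1 hn t
  have hJ3 := boundJ3 (n := n) hH0 hH1 hn ht0
  have hJ4 := boundJ4 (n := n) hH0 hH1 hn hs0 hst
  have hNdef := delta_pow_eq (n := n) hn H
  set N := (n:ℝ) ^ (-(2*H)) with hNd
  set A := (t-s) ^ (2*H) with hAd
  set Et := (n:ℝ) ^ (-H) * epsFn H n t with hEtd
  set Es := (n:ℝ) ^ (-H) * epsFn H n s with hEsd
  rw [hNdef] at hJ1 hJ3 hJ4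
  have htotal : (∫ r in (0:ℝ)..1, g1 r) + (∫ r in (0:ℝ)..1, g2 r)
      + (∫ r in (0:ℝ)..1, g3 r) + (∫ r in (0:ℝ)..1, g4 r)
      ≤ N/(2*H) + 4*Et + 2*N/(2*H) + (A + 4*N)/(2*H) := by
    have := add_le_add (add_le_add (add_le_add hJ1 hJ2) hJ3) hJ4
    linarith
  refine htotal.trans ?_
  rw [mul_add ((n:ℝ) ^ (-H))]
  have hK : N/(2*H) = N * (2*H)⁻¹ := div_eq_mul_inv _ _
  have hK2 : 2*N/(2*H) = 2*N * (2*H)⁻¹ := div_eq_mul_inv _ _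
  have hK3 : (A + 4*N)/(2*H) = (A + 4*N) * (2*H)⁻¹ := div_eq_mul_inv _ _
  have hKpos : (0:ℝ) < (2*H)⁻¹ := by positivity
  have h4H : 4/H = 8 * (2*H)⁻¹ := by field_simp; ring
  rw [hK, hK2, hK3, h4H]
  nlinarith [mul_nonneg hKpos.le hN.le, mul_nonneg hKpos.le hA,
    mul_nonneg hKpos.le hEt, mul_nonneg hKpos.le hEs, hN.le, hA, hEt, hEs]
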